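/- Every connected graph G on n ≥ 3 vertices is generically weakly rigid in the plane: for every generic configuration p ∈ ℝ^{2n}, the framework (G,p) is infinitesimally weakly rigid (and hence weakly rigid) in ℝ². -/

import Mathlib

open RealInnerProductSpace Topology

/-- The rank of the Jacobian of `f` at `x`. -/
noncomputable def jacRank {E F : Type*} [NormedAddCommGroup E] [NormedSpace ℝ E]
    [NormedAddCommGroup F] [NormedSpace ℝ F] (f : E → F) (x : E) : ℕ :=
  Module.finrank ℝ (LinearMap.range (fderiv ℝ f x).toLinearMap)

open Classical in
/-- The weak rigidity function: components `⟪p i - p j, p i - p k⟫` for triples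
`(i,j,k) ∈ T` (components outside `T` are constantly `0`, so they do not affect
the rank of the Jacobian). -/
noncomputable def weakRigidityFun {n d : ℕ} (T : Set (Fin n × Fin n × Fin n))
    (p : Fin n → EuclideanSpace ℝ (Fin d)) : Fin n × Fin n × Fin n → ℝ :=
  fun t => if t ∈ T then ⟪p t.1 - p t.2.1, p t.1 - p t.2.2⟫ else 0

/-- A valid set of triples for the graph `G`: each `(i,j,k) ∈ T` satisfies
`(i,j), (i,k) ∈ E` and `j ≤ k`. -/
def ValidTriples {n : ℕ} (G : SimpleGraph (Fin n)) (T : Set (Fin n × Fin n × Fin n)) : Prop :=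
  ∀ t ∈ T, G.Adj t.1 t.2.1 ∧ G.Adj t.1 t.2.2 ∧ t.2.1 ≤ t.2.2

/-- `(G,p)` is infinitesimally weakly rigid: for some valid triple set `T`, the
weak rigidity matrix (Jacobian of the weak rigidity function) has rank
`n*d - d*(d+1)/2` (stated without natural subtraction as `rank + d(d+1)/2 = nd`). -/
def IsInfWeaklyRigid {n d : ℕ} (G : SimpleGraph (Fin n))
    (p : Fin n → EuclideanSpace ℝ (Fin d)) : Prop :=
  ∃ T : Set (Fin n × Fin n × Fin n), ValidTriples G T ∧
    jacRank (weakRigidityFun T) p + d * (d + 1) / 2 = n * d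

open Classical in
/-- The (distance) rigidity function: components `‖p i - p j‖²` for edges of `G`
(components for non-edges are constantly `0`, so they do not affect the rank of
the Jacobian). -/
noncomputable def rigidityFun {n d : ℕ} (G : SimpleGraph (Fin n))
    (p : Fin n → EuclideanSpace ℝ (Fin d)) : Fin n × Fin n → ℝ :=
  fun e => if G.Adj e.1 e.2 then ‖p e.1 - p e.2‖ ^ 2 else 0

/-- Weak equivalence for the triple set `T`. -/
def WeaklyEquivalent {n d : ℕ} (T : Set (Fin n × Fin n × Fin n))
    (p q : Fin n → EuclideanSpace ℝ (Fin d)) : Prop :=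
  ∀ t ∈ T, ⟪p t.1 - p t.2.1, p t.1 - p t.2.2⟫ = ⟪q t.1 - q t.2.1, q t.1 - q t.2.2⟫

/-- Weak congruence: all pairwise inner products of displacements agree. -/
def WeaklyCongruent {n d : ℕ} (p q : Fin n → EuclideanSpace ℝ (Fin d)) : Prop :=
  ∀ i j k : Fin n, ⟪p i - p j, p i - p k⟫ = ⟪q i - q j, q i - q k⟫

/-- `(G,p)` is weakly rigid: for some valid triple set `T` and some neighborhood `U`
of `p`, every `q ∈ U` weakly equivalent to `p` is weakly congruent to `p`. -/
def IsWeaklyRigid {n d : ℕ} (G : SimpleGraph (Fin n))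
    (p : Fin n → EuclideanSpace ℝ (Fin d)) : Prop :=
  ∃ T : Set (Fin n × Fin n × Fin n), ValidTriples G T ∧
    ∃ U ∈ 𝓝 p, ∀ q ∈ U, WeaklyEquivalent T p q → WeaklyCongruent p q

/-- A configuration is generic if its `n*d` coordinates are algebraically independent
over the rationals. -/
def IsGeneric {n d : ℕ} (p : Fin n → EuclideanSpace ℝ (Fin d)) : Prop :=
  AlgebraicIndependent ℚ (fun x : Fin n × Fin d => p x.1 x.2)

/-! ### Auxiliary material -/

section Aux

open Complex SimpleGraph

/-- The standard isometry between `ℂ` and `ℝ²`. -/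
noncomputable def cx : ℂ ≃ₗᵢ[ℝ] EuclideanSpace ℝ (Fin 2) := Complex.orthonormalBasisOneI.repr

/-- Real dot product on `ℂ ≅ ℝ²`. -/
def rdot (z w : ℂ) : ℝ := z.re * w.re + z.im * w.im

lemma inner_cx (z w : ℂ) : ⟪cx z, cx w⟫ = rdot z w := by
  simp [cx, Complex.orthonormalBasisOneI_repr_apply, PiLp.inner_apply, Fin.sum_univ_two, rdot,
    RCLike.inner_apply, mul_comm]

lemma cx_symm_re (x : EuclideanSpace ℝ (Fin 2)) : (cx.symm x).re = x 0 := by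
  simp [cx, Complex.orthonormalBasisOneI_repr_symm_apply]

lemma cx_symm_im (x : EuclideanSpace ℝ (Fin 2)) : (cx.symm x).im = x 1 := by
  simp [cx, Complex.orthonormalBasisOneI_repr_symm_apply]

lemma rdot_comm (z w : ℂ) : rdot z w = rdot w z := by simp [rdot]; ring
lemma rdot_eq_re (z w : ℂ) : rdot z w = ((starRingEnd ℂ) z * w).re := by
  simp [rdot, Complex.mul_re]
lemma rdot_self (z : ℂ) : rdot z z = ‖z‖ ^ 2 := by
  rw [Complex.sq_norm, Complex.normSq_apply]; rfl
lemma rdot_I_self (c : ℝ) (z : ℂ) : rdot z ((c:ℂ) * (Complex.I * z)) = 0 := by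
  simp [rdot, Complex.mul_re, Complex.mul_im]; ring
lemma rdot_I_antisymm (c : ℝ) (z w : ℂ) :
    rdot z ((c:ℂ) * (Complex.I * w)) + rdot w ((c:ℂ) * (Complex.I * z)) = 0 := by
  simp [rdot, Complex.mul_re, Complex.mul_im]; ring
lemma rdot_sub (z w1 w2 : ℂ) : rdot z (w1 - w2) = rdot z w1 - rdot z w2 := by
  simp [rdot]; ring
lemma rdot_mul_unit {u : ℂ} (hu : ‖u‖ = 1) (z w : ℂ) :
    rdot (u * z) (u * w) = rdot z w := by
  have h1 : u.re^2 + u.im^2 = 1 := by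
    have h2 := congrArg (· ^ 2) hu
    simp only [Complex.sq_norm, Complex.normSq_apply, one_pow] at h2
    linear_combination h2
  simp only [rdot, Complex.mul_re, Complex.mul_im]
  ring_nf
  linear_combination (z.re * w.re + z.im * w.im) * h1

/-- Two vanishing dot products against a spanning pair force the vector to vanish. -/
lemma perp_perp_eq_zero {u1 u2 x : ℂ} (hdet : u2.re * u1.im - u2.im * u1.re ≠ 0)
    (h1 : rdot u1 x = 0) (h2 : rdot u2 x = 0) : x = 0 := by
  have hre : x.re = 0 := by
    have h3 : x.re * (u2.re * u1.im - u2.im * u1.re) = 0 := by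
      simp only [rdot] at h1 h2
      linear_combination u1.im * h2 - u2.im * h1
    rcases mul_eq_zero.1 h3 with h | h
    · exact h
    · exact absurd h hdet
  have him : x.im = 0 := by
    have h3 : x.im * (u2.re * u1.im - u2.im * u1.re) = 0 := by
      simp only [rdot] at h1 h2
      linear_combination u2.re * h1 - u1.re * h2
    rcases mul_eq_zero.1 h3 with h | h
    · exact h
    · exact absurd h hdet
  exact Complex.ext hre him

/-- A vector orthogonal to a nonzero `z` is a real multiple of `I*z`. -/
lemma exists_rot {z w : ℂ} (hz : z ≠ 0) (h : rdot z w = 0) :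
    ∃ c : ℝ, w = (c:ℂ) * (Complex.I * z) := by
  have hN : z.re * z.re + z.im * z.im ≠ 0 := by
    intro h0
    apply hz
    have h1 : z.re = 0 := by nlinarith
    have h2 : z.im = 0 := by nlinarith
    exact Complex.ext (by simp [h1]) (by simp [h2])
  refine ⟨(z.re * w.im - z.im * w.re) / (z.re * z.re + z.im * z.im), Complex.ext ?_ ?_⟩
  · simp only [Complex.mul_re, Complex.ofReal_re, Complex.ofReal_im, Complex.I_re, Complex.I_im]
    field_simp [show z.re ^ 2 + z.im ^ 2 ≠ 0 by rwa [sq, sq]]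
    simp only [rdot] at h
    linear_combination z.re * h
  · simp only [Complex.mul_im, Complex.ofReal_re, Complex.ofReal_im, Complex.I_re, Complex.I_im]
    field_simp [show z.re ^ 2 + z.im ^ 2 ≠ 0 by rwa [sq, sq]]
    simp only [rdot] at h
    linear_combination z.im * h

lemma abs_sub_le'' (x y : ℂ) : ‖x - y‖ ≤ ‖x‖ + ‖y‖ := by
  simpa [sub_eq_add_neg] using norm_add_le x (-y)

lemma abs_sub_sub_le (x y z : ℂ) :
    ‖x - y - z‖ ≤ ‖x‖ + ‖y‖ + ‖z‖ := by
  calc ‖x - y - z‖ ≤ ‖x - y‖ + ‖z‖ := abs_sub_le'' _ _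
    _ ≤ ‖x‖ + ‖y‖ + ‖z‖ := by
        have := abs_sub_le'' x y; linarith

lemma sq_abs_inj {x y : ℝ} (hx : 0 ≤ x) (hy : 0 ≤ y) (h : x ^ 2 = y ^ 2) : x = y := by
  have h0 : (x - y) * (x + y) = 0 := by linear_combination h
  rcases mul_eq_zero.1 h0 with h | h
  · linarith
  · linarith

/-- Dichotomy: two points with the same norm and same projection on a nonzero direction
are either equal or reflections of each other. -/
lemma dichotomy {b a a' : ℂ} (hb : b ≠ 0) (habs : ‖a‖ = ‖a'‖)
    (hre : rdot b a = rdot b a') :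
    a = a' ∨ ‖b‖ * ‖a - a'‖ = 2 * |((starRingEnd ℂ) b * a').im| := by
  set x := (starRingEnd ℂ) b * a with hx
  set y := (starRingEnd ℂ) b * a' with hy
  have hbc : (starRingEnd ℂ) b ≠ 0 := by simpa using hb
  have hxyabs : ‖x‖ = ‖y‖ := by
    rw [hx, hy, norm_mul, norm_mul, habs]
  have hxyre : x.re = y.re := by
    rw [← rdot_eq_re, ← rdot_eq_re] at *; rw [← hx, ← hy] at *
    simpa [rdot_eq_re] using hre
  have him2 : x.im ^ 2 = y.im ^ 2 := by
    have h2 := congrArg (· ^ 2) hxyabs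
    simp only [Complex.sq_norm, Complex.normSq_apply] at h2
    linear_combination h2 - (x.re + y.re) * hxyre
  have him : x.im = y.im ∨ x.im = -y.im := by
    have h0 : (x.im - y.im) * (x.im + y.im) = 0 := by linear_combination him2
    rcases mul_eq_zero.1 h0 with h | h
    · left; linarith
    · right; linarith
  rcases him with h | h
  · left
    have : x = y := Complex.ext hxyre h
    exact mul_left_cancel₀ hbc (hx ▸ hy ▸ this)
  · right
    have hdiff : (starRingEnd ℂ) b * (a - a') = x - y := by rw [hx, hy]; ring
    have hxy : x - y = ((-2 * y.im : ℝ) : ℂ) * Complex.I := by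
      apply Complex.ext <;> simp [hxyre, h] <;> ring
    have habs2 : ‖x - y‖ = 2 * |y.im| := by
      rw [hxy, norm_mul, Complex.norm_I, mul_one, Complex.norm_real, Real.norm_eq_abs, abs_mul]
      norm_num
    calc ‖b‖ * ‖a - a'‖
        = ‖(starRingEnd ℂ) b * (a - a')‖ := by rw [norm_mul, Complex.norm_conj]
      _ = ‖x - y‖ := by rw [hdiff]
      _ = 2 * |y.im| := habs2

/-- Genericity: no three distinct points of a generic configuration are collinear. -/
lemma generic_det {n : ℕ} {p : Fin n → EuclideanSpace ℝ (Fin 2)} (hp : IsGeneric p)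
    {i j k : Fin n} (hij : i ≠ j) (hik : i ≠ k) (hjk : j ≠ k) :
    (p j 0 - p i 0) * (p k 1 - p i 1) - (p j 1 - p i 1) * (p k 0 - p i 0) ≠ 0 := by
  intro h
  have hinj : Function.Injective (MvPolynomial.aeval (R := ℚ)
      (fun x : Fin n × Fin 2 => p x.1 x.2)) := hp
  set X : Fin n × Fin 2 → MvPolynomial (Fin n × Fin 2) ℚ := MvPolynomial.X with hX
  set P : MvPolynomial (Fin n × Fin 2) ℚ :=
    (X (j,0) - X (i,0)) * (X (k,1) - X (i,1)) - (X (j,1) - X (i,1)) * (X (k,0) - X (i,0)) with hP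
  have hPv : MvPolynomial.aeval (fun x : Fin n × Fin 2 => p x.1 x.2) P = 0 := by
    simp only [hP, hX, map_sub, map_mul, MvPolynomial.aeval_X]
    linear_combination h
  have hP0 : P = 0 := hinj (by rw [hPv]; simp)
  have h2 := congrArg (MvPolynomial.eval
    (fun x : Fin n × Fin 2 => if x = (j,0) then (1:ℚ) else if x = (k,1) then 1 else 0)) hP0
  have h01 : (0 : Fin 2) ≠ 1 := by decide
  simp only [hP, hX, map_sub, map_mul, MvPolynomial.eval_X, map_zero] at h2
  simp [Prod.ext_iff, hij.symm, hik.symm, hjk.symm, hij, hik, hjk, h01, h01.symm] at h2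

lemma exists_third {n : ℕ} (hn : 3 ≤ n) (i j : Fin n) : ∃ k : Fin n, k ≠ i ∧ k ≠ j := by
  by_contra h
  push_neg at h
  have hsub : (Finset.univ : Finset (Fin n)) ⊆ {i, j} := by
    intro k _
    simp only [Finset.mem_insert, Finset.mem_singleton]
    by_cases hk : k = i
    · exact Or.inl hk
    · exact Or.inr (h k hk)
  have h1 := Finset.card_le_card hsub
  have h2 : ({i, j} : Finset (Fin n)).card ≤ 2 := (Finset.card_insert_le i {j}).trans (by simp)
  rw [Finset.card_univ, Fintype.card_fin] at h1
  omega

end Aux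

section Graph

open SimpleGraph

lemma exists_parent {V : Type*} {G : SimpleGraph V} (hG : G.Connected) (r : V) {k : V}
    (hk : k ≠ r) : ∃ j, G.Adj j k ∧ G.dist r j + 1 = G.dist r k := by
  obtain ⟨w, hw⟩ := hG.exists_walk_length_eq_dist k r
  cases w with
  | nil => exact absurd rfl hk
  | cons h w' =>
    rename_i j
    refine ⟨j, h.symm, ?_⟩
    have hd1 : G.dist r j ≤ w'.length := by
      rw [SimpleGraph.dist_comm]; exact dist_le w'
    have hd2 : G.dist r k ≤ G.dist r j + 1 := by
      calc G.dist r k ≤ G.dist r j + G.dist j k := hG.dist_triangle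
        _ ≤ G.dist r j + 1 := by
            have : G.dist j k ≤ 1 := by
              rw [SimpleGraph.dist_comm]; simpa using dist_le (Walk.cons h Walk.nil)
            omega
    have hlen : w'.length + 1 = G.dist r k := by
      simpa [SimpleGraph.dist_comm] using hw
    omega

end Graph

/-! ### The derivative of the weak rigidity function -/

section Deriv

variable {n : ℕ}

abbrev E2 := EuclideanSpace ℝ (Fin 2)
abbrev Dom (n : ℕ) := Fin n → E2

noncomputable def projD (i : Fin n) : Dom n →L[ℝ] E2 := ContinuousLinearMap.proj i

noncomputable def Dclm (p : Dom n) (i j k : Fin n) : Dom n →L[ℝ] ℝ :=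
  ((innerSL ℝ (p i - p k) : E2 →L[ℝ] ℝ)).comp (projD i - projD j) +
  ((innerSL ℝ (p i - p j) : E2 →L[ℝ] ℝ)).comp (projD i - projD k)

lemma Dclm_apply (p : Dom n) (i j k : Fin n) (q : Dom n) :
    Dclm p i j k q = ⟪p i - p k, q i - q j⟫ + ⟪p i - p j, q i - q k⟫ := by
  simp [Dclm, projD]; simp only [inner_sub_left, inner_sub_right]

open Classical in
noncomputable def Lclm (p : Dom n) (T : Set (Fin n × Fin n × Fin n)) :
    Dom n →L[ℝ] (Fin n × Fin n × Fin n → ℝ) :=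
  ContinuousLinearMap.pi (fun t => if t ∈ T then Dclm p t.1 t.2.1 t.2.2 else 0)

lemma hasFDerivAt_wrf (p : Dom n) (T : Set (Fin n × Fin n × Fin n)) :
    HasFDerivAt (weakRigidityFun T) (Lclm p T) p := by
  classical
  rw [Lclm, show (weakRigidityFun T : Dom n → _) = fun q t =>
    (if t ∈ T then (fun q : Dom n => ⟪q t.1 - q t.2.1, q t.1 - q t.2.2⟫) else fun _ => 0) q from
    by funext q t; by_cases h : t ∈ T <;> simp [weakRigidityFun, h]]
  apply hasFDerivAt_pi.2
  intro t
  by_cases ht : t ∈ T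
  · simp only [if_pos ht]
    obtain ⟨i, j, k⟩ := t
    have hf : HasFDerivAt (fun q : Dom n => q i - q j) (projD i - projD j) p :=
      ((hasFDerivAt_apply (𝕜 := ℝ) i p).sub (hasFDerivAt_apply (𝕜 := ℝ) j p))
    have hg : HasFDerivAt (fun q : Dom n => q i - q k) (projD i - projD k) p :=
      ((hasFDerivAt_apply (𝕜 := ℝ) i p).sub (hasFDerivAt_apply (𝕜 := ℝ) k p))
    have := hf.inner ℝ hg
    refine this.congr_fderiv ?_
    ext q
    simp only [Dclm_apply, ContinuousLinearMap.comp_apply, fderivInnerCLM_apply,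
      ContinuousLinearMap.prod_apply, ContinuousLinearMap.sub_apply, projD,
      ContinuousLinearMap.proj_apply]
    rw [real_inner_comm (p i - p k) (q i - q j)]
    ring
  · simp only [if_neg ht]
    exact hasFDerivAt_const 0 p

lemma Dclm_symm (p : Dom n) (i j k : Fin n) (q : Dom n) :
    Dclm p i j k q = Dclm p i k j q := by
  rw [Dclm_apply, Dclm_apply]; ring

/-- The infinitesimal rigid motions, parameterized by a translation and a rotation speed. -/
noncomputable def motions (ζ : Fin n → ℂ) : (ℂ × ℝ) →ₗ[ℝ] Dom n where
  toFun := fun vc i => cx (vc.1 + (vc.2:ℂ) * (Complex.I * ζ i))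
  map_add' := by
    intro x y; funext i
    show cx _ = cx _ + cx _
    rw [← map_add]
    congr 1
    simp only [Prod.fst_add, Prod.snd_add]
    push_cast
    ring
  map_smul' := by
    intro c x; funext i
    show cx _ = (c • (fun i => cx (x.1 + (x.2:ℂ) * (Complex.I * ζ i)))) i
    simp only [Pi.smul_apply, ← map_smul]
    congr 1
    simp only [Prod.smul_fst, Prod.smul_snd, Complex.real_smul, smul_eq_mul]
    push_cast
    ring

lemma motions_apply (ζ : Fin n → ℂ) (vc : ℂ × ℝ) (i : Fin n) :
    motions ζ vc i = cx (vc.1 + (vc.2:ℂ) * (Complex.I * ζ i)) := rfl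

end Deriv

set_option maxHeartbeats 3200000 in
/-- Every connected graph on `n ≥ 3` vertices is generically weakly
rigid in the plane: for every generic configuration `p` in `ℝ²`, `(G,p)` is
infinitesimally weakly rigid (and hence weakly rigid). -/
theorem stmt15 {n : ℕ} (hn : 3 ≤ n) (G : SimpleGraph (Fin n)) (hG : G.Connected)
    (p : Fin n → EuclideanSpace ℝ (Fin 2)) (hp : IsGeneric p) :
    IsInfWeaklyRigid G p ∧ IsWeaklyRigid G p := by
  classical
  -- complex coordinates
  set ζ : Fin n → ℂ := fun i => cx.symm (p i) with hζ
  have hpe : ∀ a b : Fin n, p a - p b = cx (ζ a - ζ b) := by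
    intro a b; rw [map_sub]; simp [hζ]
  have hinner : ∀ a b a' b' : Fin n, ⟪p a - p b, p a' - p b'⟫ = rdot (ζ a - ζ b) (ζ a' - ζ b') := by
    intro a b a' b'; rw [hpe, hpe, inner_cx]
  -- genericity consequences
  have hgdet : ∀ {i j k : Fin n}, i ≠ j → i ≠ k → j ≠ k →
      (ζ i - ζ j).re * (ζ i - ζ k).im - (ζ i - ζ j).im * (ζ i - ζ k).re ≠ 0 := by
    intro i j k hij hik hjk h
    apply generic_det hp hij hik hjk
    have e1 : ∀ m : Fin n, (ζ m).re = p m 0 := fun m => cx_symm_re (p m)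
    have e2 : ∀ m : Fin n, (ζ m).im = p m 1 := fun m => cx_symm_im (p m)
    simp only [Complex.sub_re, Complex.sub_im, e1, e2] at h
    linear_combination h
  have hζne : ∀ {i j : Fin n}, i ≠ j → ζ i ≠ ζ j := by
    intro i j hij he
    obtain ⟨k, hki, hkj⟩ := exists_third hn i j
    exact hgdet hij (Ne.symm hki) (Ne.symm hkj) (by rw [he]; simp)
  -- root and its neighbor
  have hn0 : (0:ℕ) < n := by omega
  set r : Fin n := ⟨0, hn0⟩ with hr
  obtain ⟨t0, ht0⟩ : ∃ t : Fin n, t ≠ r := by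
    refine ⟨⟨1, by omega⟩, ?_⟩; simp [hr, Fin.ext_iff]
  obtain ⟨s, hsr, -⟩ := exists_parent hG t0 (Ne.symm ht0)
  have hrs : G.Adj r s := hsr.symm
  have hrs_ne : r ≠ s := hrs.ne
  -- parent function
  have hparex : ∀ k : Fin n, ∃ j, k ≠ r → (G.Adj j k ∧ G.dist r j + 1 = G.dist r k) := by
    intro k
    by_cases hk : k = r
    · exact ⟨r, fun h => absurd hk h⟩
    · obtain ⟨j, h1, h2⟩ := exists_parent hG r hk
      exact ⟨j, fun _ => ⟨h1, h2⟩⟩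
  choose par hpar using hparex
  have hadjp : ∀ k, k ≠ r → G.Adj (par k) k := fun k hk => (hpar k hk).1
  have hdistp : ∀ k, k ≠ r → G.dist r (par k) + 1 = G.dist r k := fun k hk => (hpar k hk).2
  have hpars : par s = r := by
    have h1 : G.dist r s = 1 := SimpleGraph.dist_eq_one_iff_adj.mpr hrs
    have h2 := hdistp s (Ne.symm hrs_ne)
    have h3 : G.dist r (par s) = 0 := by omega
    exact (hG.dist_eq_zero_iff.mp h3).symm
  -- reference function
  set ref : Fin n → Fin n := fun i => if i = r then s else par i with href_def
  have hrefr : ref r = s := by simp [href_def]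
  have hrefne : ∀ i, i ≠ r → ref i = par i := fun i hi => by simp [href_def, hi]
  have hadjref : ∀ i, G.Adj i (ref i) := by
    intro i
    by_cases hi : i = r
    · rw [hi, hrefr]; exact hrs
    · rw [hrefne i hi]; exact (hadjp i hi).symm
  -- the triple set
  set T : Set (Fin n × Fin n × Fin n) :=
    {x | ∃ k, k ≠ r ∧ x = (par k, k, k)} ∪
    {x | ∃ k, k ≠ r ∧ k ≠ s ∧ x = (par k, min (ref (par k)) k, max (ref (par k)) k)} with hT
  have hmemA : ∀ k, k ≠ r → (par k, k, k) ∈ T := fun k hk => Or.inl ⟨k, hk, rfl⟩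
  have hmemB : ∀ k, k ≠ r → k ≠ s →
      (par k, min (ref (par k)) k, max (ref (par k)) k) ∈ T :=
    fun k h1 h2 => Or.inr ⟨k, h1, h2, rfl⟩
  have hvalid : ValidTriples G T := by
    rintro t (⟨k, hk, rfl⟩ | ⟨k, hk1, hk2, rfl⟩)
    · exact ⟨hadjp k hk, hadjp k hk, le_refl _⟩
    · have hj := hadjref (par k)
      have hk' := hadjp k hk1
      refine ⟨?_, ?_, min_le_max⟩
      · rcases le_total (ref (par k)) k with h | h
        · rwa [min_eq_left h]
        · rwa [min_eq_right h]
      · rcases le_total (ref (par k)) k with h | h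
        · rwa [max_eq_right h]
        · rwa [max_eq_left h]
  -- distinctness of the triple at each step
  have hstep_ne : ∀ k, k ≠ r → k ≠ s →
      (par k ≠ ref (par k) ∧ par k ≠ k ∧ ref (par k) ≠ k) := by
    intro k hkr hks
    refine ⟨(hadjref (par k)).ne, (hadjp k hkr).ne, ?_⟩
    by_cases hik : par k = r
    · rw [hik, hrefr]; exact fun h => hks h.symm
    · rw [hrefne _ hik]
      intro h
      have d1 := hdistp k hkr
      have d2 := hdistp (par k) hik
      rw [h] at d2
      omega
  ------------------------------------------------------------------
  -- PART 1 : infinitesimal weak rigidity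
  ------------------------------------------------------------------
  have hfd := hasFDerivAt_wrf p T
  have hLf : fderiv ℝ (weakRigidityFun T) p = Lclm p T := hfd.fderiv
  have hcomp : ∀ q : Dom n, Lclm p T q = 0 → ∀ t ∈ T, Dclm p t.1 t.2.1 t.2.2 q = 0 := by
    intro q hq t ht
    have h0 := congrFun hq t
    simpa [Lclm, ContinuousLinearMap.pi_apply, if_pos ht] using h0
  have hζrs : ζ r - ζ s ≠ 0 := sub_ne_zero.mpr (hζne hrs_ne)
  have hrange_le : LinearMap.range (motions ζ) ≤ LinearMap.ker (Lclm p T).toLinearMap := by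
    rintro q ⟨vc, rfl⟩
    rw [LinearMap.mem_ker]
    show Lclm p T (motions ζ vc) = 0
    funext t
    by_cases ht : t ∈ T
    · simp only [Lclm, ContinuousLinearMap.pi_apply, if_pos ht, Pi.zero_apply]
      obtain ⟨i, j, k⟩ := t
      rw [Dclm_apply]
      have hδ : ∀ a b : Fin n, motions ζ vc a - motions ζ vc b
          = cx ((vc.2:ℂ) * (Complex.I * (ζ a - ζ b))) := by
        intro a b
        rw [motions_apply, motions_apply, ← map_sub]
        congr 1
        ring
      rw [hδ, hδ, hpe, hpe, inner_cx, inner_cx]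
      exact rdot_I_antisymm vc.2 (ζ i - ζ k) (ζ i - ζ j)
    · simp [Lclm, ContinuousLinearMap.pi_apply, if_neg ht]
  have hker_le : LinearMap.ker (Lclm p T).toLinearMap ≤ LinearMap.range (motions ζ) := by
    intro q hq
    have hq0 : Lclm p T q = 0 := LinearMap.mem_ker.mp hq
    set ω : Fin n → ℂ := fun m => cx.symm (q m) with hω
    have hqe : ∀ a b : Fin n, q a - q b = cx (ω a - ω b) := by
      intro a b; rw [map_sub]; simp [hω]
    have hD : ∀ i j k : Fin n, Dclm p i j k q
        = rdot (ζ i - ζ k) (ω i - ω j) + rdot (ζ i - ζ j) (ω i - ω k) := by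
      intro i j k; rw [Dclm_apply, hpe, hpe, hqe, hqe, inner_cx, inner_cx]
    have eqA : ∀ k, k ≠ r → rdot (ζ (par k) - ζ k) (ω (par k) - ω k) = 0 := by
      intro k hk
      have h0 := hcomp q hq0 _ (hmemA k hk)
      rw [hD] at h0
      linarith
    have eqB : ∀ k, k ≠ r → k ≠ s →
        rdot (ζ (par k) - ζ k) (ω (par k) - ω (ref (par k))) +
        rdot (ζ (par k) - ζ (ref (par k))) (ω (par k) - ω k) = 0 := by
      intro k h1 h2
      have h0 := hcomp q hq0 _ (hmemB k h1 h2)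
      rcases le_total (ref (par k)) k with hle | hle
      · rw [min_eq_left hle, max_eq_right hle, hD] at h0; exact h0
      · rw [min_eq_right hle, max_eq_left hle, Dclm_symm, hD] at h0; exact h0
    have hA_s : rdot (ζ r - ζ s) (ω r - ω s) = 0 := by
      have h0 := eqA s (Ne.symm hrs_ne)
      rwa [hpars] at h0
    obtain ⟨c, hc⟩ := exists_rot hζrs hA_s
    set v : ℂ := ω r - (c:ℂ) * (Complex.I * ζ r) with hv
    have hωr : ω r = v + (c:ℂ) * (Complex.I * ζ r) := by rw [hv]; ring
    have hωs : ω s = v + (c:ℂ) * (Complex.I * ζ s) := by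
      rw [hv]; linear_combination -hc
    have key : ∀ m : ℕ, ∀ k : Fin n, G.dist r k = m →
        ω k = v + (c:ℂ) * (Complex.I * ζ k) := by
      intro m
      induction m using Nat.strong_induction_on with
      | _ m IH =>
        intro k hk
        by_cases hkr : k = r
        · rw [hkr]; exact hωr
        by_cases hks : k = s
        · rw [hks]; exact hωs
        have hdi : G.dist r (par k) + 1 = G.dist r k := hdistp k hkr
        have hωi : ω (par k) = v + (c:ℂ) * (Complex.I * ζ (par k)) :=
          IH (G.dist r (par k)) (by omega) (par k) rfl
        have hωj : ω (ref (par k)) = v + (c:ℂ) * (Complex.I * ζ (ref (par k))) := by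
          by_cases hir : par k = r
          · rw [hir, hrefr]; exact hωs
          · have hdj := hdistp (par k) hir
            rw [hrefne _ hir]
            exact IH (G.dist r (par (par k))) (by omega) _ rfl
        obtain ⟨hne1, hne2, hne3⟩ := hstep_ne k hkr hks
        have e1 := eqA k hkr
        have e2 := eqB k hkr hks
        have hbij : ω (par k) - ω (ref (par k))
            = (c:ℂ) * (Complex.I * (ζ (par k) - ζ (ref (par k)))) := by
          rw [hωi, hωj]; ring
        have hx1 : rdot (ζ (par k) - ζ k)
            ((ω (par k) - ω k) - (c:ℂ) * (Complex.I * (ζ (par k) - ζ k))) = 0 := by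
          rw [rdot_sub, e1, rdot_I_self]; ring
        have hx2 : rdot (ζ (par k) - ζ (ref (par k)))
            ((ω (par k) - ω k) - (c:ℂ) * (Complex.I * (ζ (par k) - ζ k))) = 0 := by
          rw [rdot_sub]
          have h3 : rdot (ζ (par k) - ζ k) (ω (par k) - ω (ref (par k)))
              = rdot (ζ (par k) - ζ k)
                  ((c:ℂ) * (Complex.I * (ζ (par k) - ζ (ref (par k))))) := by
            rw [hbij]
          have h4 := rdot_I_antisymm c (ζ (par k) - ζ k) (ζ (par k) - ζ (ref (par k)))
          linarith
        have hx0 := perp_perp_eq_zero (hgdet hne1 hne2 hne3) hx1 hx2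
        linear_combination hωi - hx0
    refine ⟨(v, c), ?_⟩
    funext i
    rw [motions_apply]
    have hk := key (G.dist r i) i rfl
    rw [← hk]
    simp [hω]
  have hker_eq : LinearMap.ker (Lclm p T).toLinearMap = LinearMap.range (motions ζ) :=
    le_antisymm hker_le hrange_le
  have hΦinj : Function.Injective (motions ζ) := by
    rw [← LinearMap.ker_eq_bot]
    apply LinearMap.ker_eq_bot'.mpr
    rintro ⟨v, c⟩ hvc
    have h1 : cx (v + (c:ℂ) * (Complex.I * ζ r)) = 0 := congrFun hvc r
    have h2 : cx (v + (c:ℂ) * (Complex.I * ζ s)) = 0 := congrFun hvc s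
    rw [show (0 : E2) = cx 0 by simp] at h1 h2
    have e1 := cx.injective h1
    have e2 := cx.injective h2
    have e3 : (c:ℂ) * (Complex.I * (ζ r - ζ s)) = 0 := by linear_combination e1 - e2
    have hc0 : c = 0 := by
      rcases mul_eq_zero.1 e3 with h | h
      · exact_mod_cast h
      · rcases mul_eq_zero.1 h with h' | h'
        · exact absurd h' Complex.I_ne_zero
        · exact absurd h' hζrs
    have hv0 : v = 0 := by
      rw [hc0] at e1
      simpa using e1
    simp [hv0, hc0, Prod.ext_iff]
  have hfr : Module.finrank ℝ (LinearMap.range (motions ζ)) = 3 := by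
    rw [LinearMap.finrank_range_of_inj hΦinj]
    simp [Module.finrank_prod, Complex.finrank_real_complex]
  have hrank := LinearMap.finrank_range_add_finrank_ker (Lclm p T).toLinearMap
  have hdom : Module.finrank ℝ (Dom n) = n * 2 := by
    rw [Module.finrank_pi_fintype]
    simp [finrank_euclideanSpace_fin, Finset.sum_const, Finset.card_univ, mul_comm]
  rw [hdom, hker_eq, hfr] at hrank
  have part1 : IsInfWeaklyRigid G p := by
    refine ⟨T, hvalid, ?_⟩
    have hjac : jacRank (weakRigidityFun T) p
        = Module.finrank ℝ (LinearMap.range (Lclm p T).toLinearMap) := by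
      rw [jacRank, hLf]
    rw [hjac]
    norm_num
    omega
  ------------------------------------------------------------------
  -- PART 2 : weak rigidity
  ------------------------------------------------------------------
  have part2 : IsWeaklyRigid G p := by
    set ℓ : ℝ := ‖ζ s - ζ r‖ with hℓ
    have hζsr : ζ s - ζ r ≠ 0 := sub_ne_zero.mpr (hζne (Ne.symm hrs_ne))
    have hℓpos : 0 < ℓ := by rw [hℓ]; exact norm_pos_iff.mpr hζsr
    have hrmem : r ∈ (Finset.univ : Finset (Fin n)) := Finset.mem_univ r
    set M : ℝ := Finset.univ.sup' ⟨r, hrmem⟩ (fun k => ‖ζ k - ζ r‖) with hM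
    have hMk : ∀ k, ‖ζ k - ζ r‖ ≤ M :=
      fun k => Finset.le_sup' (fun k => ‖ζ k - ζ r‖) (Finset.mem_univ k)
    have hM0 : 0 ≤ M := le_trans (by positivity) (hMk r)
    set C : ℝ := 2 + 2 * M / ℓ with hC
    have hCpos : 0 < C := by rw [hC]; positivity
    set g : Fin n → ℝ := fun k => if k = r ∨ k = s then 1 else
      2 * |((starRingEnd ℂ) (ζ (par k) - ζ (ref (par k))) * (ζ (par k) - ζ k)).im| /
        (‖ζ (par k) - ζ (ref (par k))‖ * C) with hg
    have hgk_eq : ∀ k, k ≠ r → k ≠ s → g k =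
        2 * |((starRingEnd ℂ) (ζ (par k) - ζ (ref (par k))) * (ζ (par k) - ζ k)).im| /
        (‖ζ (par k) - ζ (ref (par k))‖ * C) := by
      intro k h1 h2
      rw [hg]
      simp only [if_neg (not_or.mpr ⟨h1, h2⟩)]
    have him_ne : ∀ k, k ≠ r → k ≠ s →
        ((starRingEnd ℂ) (ζ (par k) - ζ (ref (par k))) * (ζ (par k) - ζ k)).im ≠ 0 := by
      intro k h1 h2
      obtain ⟨hne1, hne2, hne3⟩ := hstep_ne k h1 h2
      have h5 := hgdet hne1 hne2 hne3
      intro h0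
      apply h5
      rw [Complex.mul_im] at h0
      simp only [Complex.conj_re, Complex.conj_im] at h0
      linear_combination h0
    have hgpos : ∀ k, 0 < g k := by
      intro k
      by_cases hk : k = r ∨ k = s
      · rw [hg]; simp only [if_pos hk]; norm_num
      · push_neg at hk
        rw [hgk_eq k hk.1 hk.2]
        have h6 := him_ne k hk.1 hk.2
        have h7 : ζ (par k) - ζ (ref (par k)) ≠ 0 :=
          sub_ne_zero.mpr (hζne (hstep_ne k hk.1 hk.2).1)
        have h8 : 0 < ‖ζ (par k) - ζ (ref (par k))‖ := norm_pos_iff.mpr h7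
        have h9 : 0 < |((starRingEnd ℂ) (ζ (par k) - ζ (ref (par k))) * (ζ (par k) - ζ k)).im| :=
          abs_pos.mpr h6
        positivity
    set ε : ℝ := Finset.univ.inf' ⟨r, hrmem⟩ g with hε
    have hεpos : 0 < ε := by
      rw [hε]; refine (Finset.lt_inf'_iff _).2 ?_
      intro k _
      exact hgpos k
    have hεle : ∀ k, ε ≤ g k := fun k => Finset.inf'_le g (Finset.mem_univ k)
    refine ⟨T, hvalid, Metric.ball p ε, Metric.ball_mem_nhds p hεpos, ?_⟩
    intro q hqball hweq
    set ω : Fin n → ℂ := fun m => cx.symm (q m) with hω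
    have hqe : ∀ a b : Fin n, q a - q b = cx (ω a - ω b) := by
      intro a b; rw [map_sub]; simp [hω]
    have hq_inner : ∀ a b a' b' : Fin n,
        ⟪q a - q b, q a' - q b'⟫ = rdot (ω a - ω b) (ω a' - ω b') := by
      intro a b a' b'; rw [hqe, hqe, inner_cx]
    have eqA : ∀ k, k ≠ r → rdot (ζ (par k) - ζ k) (ζ (par k) - ζ k)
        = rdot (ω (par k) - ω k) (ω (par k) - ω k) := by
      intro k hk
      have h0 := hweq _ (hmemA k hk)
      rwa [hinner, hq_inner] at h0
    have eqB : ∀ k, k ≠ r → k ≠ s →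
        rdot (ζ (par k) - ζ (ref (par k))) (ζ (par k) - ζ k)
          = rdot (ω (par k) - ω (ref (par k))) (ω (par k) - ω k) := by
      intro k h1 h2
      have h0 := hweq _ (hmemB k h1 h2)
      rcases le_total (ref (par k)) k with hle | hle
      · rw [min_eq_left hle, max_eq_right hle, hinner, hq_inner] at h0; exact h0
      · rw [min_eq_right hle, max_eq_left hle, hinner, hq_inner] at h0
        rw [rdot_comm]
        rw [h0]
        rw [rdot_comm]
    have habsA : ∀ k, k ≠ r →
        ‖ω (par k) - ω k‖ = ‖ζ (par k) - ζ k‖ := by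
      intro k hk
      have h0 := eqA k hk
      rw [rdot_self, rdot_self] at h0
      exact sq_abs_inj (norm_nonneg _) (norm_nonneg _) h0.symm
    have hℓs : ‖ω s - ω r‖ = ℓ := by
      have h0 := habsA s (Ne.symm hrs_ne)
      rw [hpars] at h0
      rw [norm_sub_rev, h0, hℓ, norm_sub_rev]
    set u : ℂ := (ω s - ω r) / (ζ s - ζ r) with hu_def
    have hu_abs : ‖u‖ = 1 := by
      rw [hu_def, norm_div, hℓs, ← hℓ]
      exact div_self hℓpos.ne'
    have hus : u * (ζ s - ζ r) = ω s - ω r := div_mul_cancel₀ _ hζsr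
    have hfs : ω s = ω r + u * (ζ s - ζ r) := by rw [hus]; ring
    have hune : u ≠ 0 := by
      intro h0
      rw [h0] at hu_abs
      simp at hu_abs
    have hdq : ∀ m : Fin n, ‖ω m - ζ m‖ < ε := by
      intro m
      have h8 : dist (q m) (p m) ≤ dist q p := dist_le_pi_dist q p m
      have h9 : dist q p < ε := Metric.mem_ball.mp hqball
      have h10 : ‖ω m - ζ m‖ = dist (q m) (p m) := by
        rw [hω, hζ, ← Complex.dist_eq, LinearIsometryEquiv.dist_map]
      linarith
    have h1u : ‖1 - u‖ * ℓ < 2 * ε := by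
      have h11 : (1 - u) * (ζ s - ζ r) = (ζ s - ω s) - (ζ r - ω r) := by
        linear_combination -hus
      have h12 : ‖1 - u‖ * ℓ
          = ‖(ζ s - ω s) - (ζ r - ω r)‖ := by
        rw [← h11, norm_mul, hℓ]
      have h13 := abs_sub_le'' (ζ s - ω s) (ζ r - ω r)
      have h14 : ‖ζ s - ω s‖ < ε := by
        rw [norm_sub_rev]; exact hdq s
      have h15 : ‖ζ r - ω r‖ < ε := by
        rw [norm_sub_rev]; exact hdq r
      rw [h12]
      linarith
    -- the key induction
    have key : ∀ m : ℕ, ∀ k : Fin n, G.dist r k = m → ω k = ω r + u * (ζ k - ζ r) := by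
      intro m
      induction m using Nat.strong_induction_on with
      | _ m IH =>
        intro k hk
        by_cases hkr : k = r
        · rw [hkr]; ring
        by_cases hks : k = s
        · rw [hks]; exact hfs
        have hdi : G.dist r (par k) + 1 = G.dist r k := hdistp k hkr
        have hωi : ω (par k) = ω r + u * (ζ (par k) - ζ r) :=
          IH (G.dist r (par k)) (by omega) (par k) rfl
        have hωj : ω (ref (par k)) = ω r + u * (ζ (ref (par k)) - ζ r) := by
          by_cases hir : par k = r
          · rw [hir, hrefr]; exact hfs
          · have hdj := hdistp (par k) hir
            rw [hrefne _ hir]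
            exact IH (G.dist r (par (par k))) (by omega) _ rfl
        obtain ⟨hne1, hne2, hne3⟩ := hstep_ne k hkr hks
        have hbval : ω (par k) - ω (ref (par k)) = u * (ζ (par k) - ζ (ref (par k))) := by
          rw [hωi, hωj]; ring
        have hbne : ω (par k) - ω (ref (par k)) ≠ 0 := by
          rw [hbval]
          exact mul_ne_zero hune (sub_ne_zero.mpr (hζne hne1))
        have habs' : ‖ω (par k) - ω k‖
            = ‖u * (ζ (par k) - ζ k)‖ := by
          rw [norm_mul, hu_abs, one_mul]
          exact habsA k hkr
        have hre' : rdot (ω (par k) - ω (ref (par k))) (ω (par k) - ω k)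
            = rdot (ω (par k) - ω (ref (par k))) (u * (ζ (par k) - ζ k)) := by
          rw [← eqB k hkr hks, hbval, rdot_mul_unit hu_abs]
        rcases dichotomy hbne habs' hre' with heq | hrefl
        · linear_combination hωi - heq
        · exfalso
          have huc : (starRingEnd ℂ) u * u = 1 := by
            have h7 : Complex.normSq u = 1 := by
              rw [Complex.normSq_eq_norm_sq, hu_abs]; norm_num
            rw [mul_comm, Complex.mul_conj, h7]
            norm_num
          have hconj : (starRingEnd ℂ) (ω (par k) - ω (ref (par k))) * (u * (ζ (par k) - ζ k))
              = (starRingEnd ℂ) (ζ (par k) - ζ (ref (par k))) * (ζ (par k) - ζ k) := by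
            rw [hbval, map_mul]
            linear_combination
              ((starRingEnd ℂ) (ζ (par k) - ζ (ref (par k))) * (ζ (par k) - ζ k)) * huc
          rw [hconj] at hrefl
          have hdiff : ω (par k) - ω k - u * (ζ (par k) - ζ k)
              = (ω r + u * (ζ k - ζ r)) - ω k := by
            linear_combination hωi
          rw [hdiff] at hrefl
          -- bound |ω r + u (ζ k − ζ r) − ω k| < ε * C
          have t3 : ‖(1 - u) * (ζ k - ζ r)‖ ≤ (2 * ε / ℓ) * M := by
            rw [norm_mul]
            apply mul_le_mul _ (hMk k) (norm_nonneg _) (by positivity)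
            rw [le_div_iff₀ hℓpos]
            exact h1u.le
          have e14 : (ω r + u * (ζ k - ζ r)) - ω k
              = (ω r - ζ r) - (ω k - ζ k) - (1 - u) * (ζ k - ζ r) := by ring
          have t4 := abs_sub_sub_le (ω r - ζ r) (ω k - ζ k) ((1 - u) * (ζ k - ζ r))
          rw [← e14] at t4
          have eC : ε * C = ε + ε + (2 * ε / ℓ) * M := by
            rw [hC]; field_simp; ring
          have hbound : ‖(ω r + u * (ζ k - ζ r)) - ω k‖ < ε * C := by
            have := hdq r
            have := hdq k
            rw [eC]
            linarith
          -- contradiction with the reflection distance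
          set L : ℝ := ‖ζ (par k) - ζ (ref (par k))‖ with hL
          have hLpos : 0 < L := norm_pos_iff.mpr (sub_ne_zero.mpr (hζne hne1))
          have hLb : ‖ω (par k) - ω (ref (par k))‖ = L := by
            rw [hbval, norm_mul, hu_abs, one_mul, hL]
          rw [hLb] at hrefl
          have h21 : ε * C ≤ g k * C := mul_le_mul_of_nonneg_right (hεle k) hCpos.le
          have h22 : L * (g k * C)
              = 2 * |((starRingEnd ℂ) (ζ (par k) - ζ (ref (par k))) * (ζ (par k) - ζ k)).im| := by
            rw [hgk_eq k hkr hks, ← hL]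
            field_simp [hLpos.ne', hCpos.ne']
          have h20 : L * ‖(ω r + u * (ζ k - ζ r)) - ω k‖ < L * (ε * C) :=
            mul_lt_mul_of_pos_left hbound hLpos
          have h23 : L * (ε * C) ≤ L * (g k * C) :=
            mul_le_mul_of_nonneg_left h21 hLpos.le
          linarith
    -- conclude weak congruence
    intro i j k
    have hfi := key (G.dist r i) i rfl
    have hfj := key (G.dist r j) j rfl
    have hfk := key (G.dist r k) k rfl
    rw [hinner, hq_inner]
    have e1 : ω i - ω j = u * (ζ i - ζ j) := by rw [hfi, hfj]; ring
    have e2 : ω i - ω k = u * (ζ i - ζ k) := by rw [hfi, hfk]; ring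
    rw [e1, e2, rdot_mul_unit hu_abs]
  exact ⟨part1, part2⟩
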